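/- arXiv:1910.05172 — 2 statements merged into one kernel-verified Lean document; each statement's English description precedes it below -/
import Mathlib

section
/- Let C have equalizers, products, and exponentials, and T be a strong monad on C with costrength rst (obtained from the strength via the symmetry). For T-algebras (A, f_A), (B, f_B), define A ⊸ B as the equalizer of λ(ev ∘ (id × f_A)) and λ(f_B ∘ T ev ∘ rst) : (A ⇒ B) → (T A ⇒ B). Then for every object C₀, there is a bijection between morphisms C₀ → A ⊸ B and morphisms h : C₀ × A → B that are T-algebra homomorphisms in their right-hand argument, natural via currying along the equalizer inclusion. -/
/-! Currying in the right-hand factor, `h ↦ λ(h ∘ σ)`, turns `h ∘ (id × f_A)` and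
`f_B ∘ T h ∘ rst` into the composites of `λ(h ∘ σ)` with the two parallel maps defining `A ⊸ B`
(the second by naturality of the strength). So `h` is a homomorphism in its right-hand argument
exactly when its curried form equalizes them, i.e. factors uniquely through `A ⊸ B`. -/

open CategoryTheory MonoidalCategory CartesianMonoidalCategory SemiCartesianMonoidalCategory

variable {C : Type*} [Category C] [CartesianMonoidalCategory C]

attribute [local instance] BraidedCategory.ofCartesianMonoidalCategory

/-- A (left) tensorial strength for a monad `T` on a cartesian monoidal category,
together with the strength laws used in the paper. -/
structure CartesianStrength (T : Monad C) where
  st : ∀ X Y : C, X ⊗ T.obj Y ⟶ T.obj (X ⊗ Y)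
  st_natural : ∀ {X X' Y Y' : C} (f : X ⟶ X') (g : Y ⟶ Y'),
    (f ⊗ₘ T.map g) ≫ st X' Y' = st X Y ≫ T.map (f ⊗ₘ g)
  st_unit : ∀ X Y : C, (X ◁ T.η.app Y) ≫ st X Y = T.η.app (X ⊗ Y)
  st_mult : ∀ X Y : C, (X ◁ T.μ.app Y) ≫ st X Y =
    st X (T.obj Y) ≫ T.map (st X Y) ≫ T.μ.app (X ⊗ Y)
  st_snd : ∀ X Y : C, st X Y ≫ T.map (snd X Y) = snd X (T.obj Y)
  st_assoc : ∀ X Y Z : C, st (X ⊗ Y) Z ≫ T.map (α_ X Y Z).hom =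
    (α_ X Y (T.obj Z)).hom ≫ (X ◁ st Y Z) ≫ st X (Y ⊗ Z)

/-- `h : D ⊗ A ⟶ B` is a `T`-algebra homomorphism in its right-hand argument. -/
def IsRightAlgHom {T : Monad C} (S : CartesianStrength T) (D : C)
    (X Y : Monad.Algebra T) (h : D ⊗ X.A ⟶ Y.A) : Prop :=
  (D ◁ X.a) ≫ h = S.st D X.A ≫ T.map h ≫ Y.a

open Limits CartesianClosed MonoidalClosed

section CurryRight

variable [MonoidalClosed C] {A A' B D E : C}

def curryRight : (D ⊗ A ⟶ B) ≃ (D ⟶ A ⟹ B) where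
  toFun h := curry ((β_ A D).hom ≫ h)
  invFun g := (β_ D A).hom ≫ uncurry g
  left_inv h := by simp
  right_inv g := by simp

theorem curryRight_apply (h : D ⊗ A ⟶ B) : curryRight h = curry ((β_ A D).hom ≫ h) := rfl

theorem comp_curryRight (g : D ⟶ E) (k : E ⊗ A ⟶ B) :
    g ≫ curryRight k = curryRight ((g ▷ A) ≫ k) := by
  rw [curryRight_apply, curryRight_apply, ← curry_natural_left,
    BraidedCategory.braiding_naturality_right_assoc]

theorem whiskerRight_braiding_ev (g : D ⟶ A ⟹ B) :
    (g ▷ A) ≫ (β_ (A ⟹ B) A).hom ≫ (ihom.ev A).app B = curryRight.symm g := by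
  rw [BraidedCategory.braiding_naturality_left_assoc, ← uncurry_eq]
  rfl

theorem curryRight_comp_curry_whiskerRight_ev (f : A' ⟶ A) (h : D ⊗ A ⟶ B) :
    curryRight h ≫ curry ((f ▷ (A ⟹ B)) ≫ (ihom.ev A).app B) = curryRight ((D ◁ f) ≫ h) := by
  rw [curryRight_apply, curryRight_apply, ← curry_natural_left, whisker_exchange_assoc,
    ← uncurry_eq, uncurry_curry, BraidedCategory.braiding_naturality_left_assoc]

end CurryRight

section ExternalExponent

variable [MonoidalClosed C] {T : Monad C} (S : CartesianStrength T) (X Y : Monad.Algebra T)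

/-- `λ(ev ∘ (f_A × id))`, i.e. `φ ↦ φ ∘ f_A`. -/
def precompStructureMap : (X.A ⟹ Y.A) ⟶ (T.obj X.A ⟹ Y.A) :=
  curry ((X.a ▷ (X.A ⟹ Y.A)) ≫ (ihom.ev X.A).app Y.A)

/-- `λ(f_B ∘ T ev ∘ rst)`, i.e. `φ ↦ f_B ∘ T φ`, the extension of `φ` to the free algebra. -/
def freeExtension : (X.A ⟹ Y.A) ⟶ (T.obj X.A ⟹ Y.A) :=
  curry ((β_ (T.obj X.A) (X.A ⟹ Y.A)).hom ≫ S.st (X.A ⟹ Y.A) X.A ≫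
    T.map ((β_ (X.A ⟹ Y.A) X.A).hom ≫ (ihom.ev X.A).app Y.A) ≫ Y.a)

variable {X Y} {D : C}

theorem curryRight_comp_precompStructureMap (h : D ⊗ X.A ⟶ Y.A) :
    curryRight h ≫ precompStructureMap X Y = curryRight ((D ◁ X.a) ≫ h) :=
  curryRight_comp_curry_whiskerRight_ev X.a h

theorem curryRight_comp_freeExtension (h : D ⊗ X.A ⟶ Y.A) :
    curryRight h ≫ freeExtension S X Y = curryRight (S.st D X.A ≫ T.map h ≫ Y.a) := by
  have hst := S.st_natural (curryRight h) (𝟙 X.A)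
  rw [T.map_id, tensorHom_id, tensorHom_id] at hst
  rw [freeExtension, ← curryRight_apply, comp_curryRight, reassoc_of% hst,
    ← Functor.map_comp_assoc, whiskerRight_braiding_ev, Equiv.symm_apply_apply]

theorem isRightAlgHom_iff_curryRight (h : D ⊗ X.A ⟶ Y.A) :
    IsRightAlgHom S D X Y h ↔
      curryRight h ≫ precompStructureMap X Y = curryRight h ≫ freeExtension S X Y := by
  rw [curryRight_comp_precompStructureMap, curryRight_comp_freeExtension,
    curryRight.injective.eq_iff, IsRightAlgHom]

end ExternalExponent

open Limits CartesianClosed MonoidalClosed in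
/-- With `A ⊸ B` defined as the equalizer of `λ(ev ∘ (f_A × id))` and
`λ(f_B ∘ T ev ∘ rst) : (A ⟹ B) ⟶ (T A ⟹ B)` (where the costrength `rst` is obtained
from the strength via the symmetry), morphisms `C₀ ⟶ A ⊸ B` are in bijection with
morphisms `h : C₀ ⊗ A ⟶ B` that are `T`-algebra homomorphisms in their right-hand
argument, the bijection being compatible with currying along the equalizer inclusion. -/
theorem external_exponent_bijection [MonoidalClosed C] [HasEqualizers C] {T : Monad C}
    (S : CartesianStrength T) (X Y : Monad.Algebra T) (C₀ : C) :
    ∃ Θ : {h : C₀ ⊗ X.A ⟶ Y.A // IsRightAlgHom S C₀ X Y h} ≃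
        (C₀ ⟶ equalizer
          (curry ((X.a ▷ (X.A ⟹ Y.A)) ≫ (ihom.ev X.A).app Y.A))
          (curry ((β_ (T.obj X.A) (X.A ⟹ Y.A)).hom ≫ S.st (X.A ⟹ Y.A) X.A ≫
            T.map ((β_ (X.A ⟹ Y.A) X.A).hom ≫ (ihom.ev X.A).app Y.A) ≫ Y.a))),
      ∀ h, Θ h ≫ equalizer.ι
          (curry ((X.a ▷ (X.A ⟹ Y.A)) ≫ (ihom.ev X.A).app Y.A))
          (curry ((β_ (T.obj X.A) (X.A ⟹ Y.A)).hom ≫ S.st (X.A ⟹ Y.A) X.A ≫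
            T.map ((β_ (X.A ⟹ Y.A) X.A).hom ≫ (ihom.ev X.A).app Y.A) ≫ Y.a)) =
        curry ((β_ X.A C₀).hom ≫ h.1) := by
  let homIso := Fork.IsLimit.homIso
    (equalizerIsEqualizer (precompStructureMap X Y) (freeExtension S X Y)) C₀
  refine ⟨(curryRight.subtypeEquiv (isRightAlgHom_iff_curryRight S)).trans homIso.symm,
    fun h => ?_⟩
  exact congrArg Subtype.val (homIso.apply_symm_apply _)
end

section
/- With A ⊸ B defined as the equalizer e : A ⊸ B → (A ⇒ B) of λ(ev ∘ (id × f_A)) and λ(f_B ∘ T ev ∘ rst), the morphism ev ∘ (e × id) : (A ⊸ B) × A → B is a T-algebra homomorphism in its right-hand argument. -/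
open CategoryTheory MonoidalCategory CartesianMonoidalCategory

variable {C : Type*} [Category C] [CartesianMonoidalCategory C]

attribute [local instance] BraidedCategory.ofCartesianMonoidalCategory

/-
After uncurrying, the equalizer condition says that the two sides of the homomorphism
equation for evaluation `(A ⟹ B) ⊗ A ⟶ B` agree once precomposed with `e × id`
(up to the symmetry swapping the factors). Naturality of the strength in its first
argument moves `e × id` inside `T`, which is exactly the homomorphism equation for
`ev ∘ (e × id)`.
-/

namespace CartesianStrength

variable {T : Monad C} (S : CartesianStrength T)

lemma st_natural_left {D D' : C} (f : D ⟶ D') (Z : C) :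
    (f ▷ T.obj Z) ≫ S.st D' Z = S.st D Z ≫ T.map (f ▷ Z) := by
  simpa only [T.map_id, tensorHom_id] using S.st_natural f (𝟙 Z)

end CartesianStrength

lemma isRightAlgHom_braiding_comp_iff {T : Monad C} (S : CartesianStrength T) (D : C)
    (X Y : Monad.Algebra T) (h : X.A ⊗ D ⟶ Y.A) :
    IsRightAlgHom S D X Y ((β_ D X.A).hom ≫ h) ↔
      (X.a ▷ D) ≫ h =
        (β_ (T.obj X.A) D).hom ≫ S.st D X.A ≫ T.map ((β_ D X.A).hom ≫ h) ≫ Y.a := by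
  rw [IsRightAlgHom, BraidedCategory.braiding_naturality_right_assoc,
    ← Iso.eq_inv_comp, ← SymmetricCategory.braiding_swap_eq_inv_braiding]

open MonoidalClosed in
lemma whiskerLeft_comp_eq_of_comp_curry_eq [MonoidalClosed C] {A D F Z : C} {e : D ⟶ F}
    {u v : A ⊗ F ⟶ Z} (h : e ≫ curry u = e ≫ curry v) :
    (A ◁ e) ≫ u = (A ◁ e) ≫ v := by
  simpa only [uncurry_natural_left, uncurry_curry] using congrArg uncurry h

open Limits CartesianClosed MonoidalClosed in
/-- With `e : A ⊸ B ⟶ (A ⟹ B)` the equalizer of `λ(ev ∘ (f_A × id))` and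
`λ(f_B ∘ T ev ∘ rst)`, the morphism `ev ∘ (e × id) : (A ⊸ B) ⊗ A ⟶ B` is a
`T`-algebra homomorphism in its right-hand argument. -/
theorem ev_equalizer_isRightAlgHom [MonoidalClosed C] [HasEqualizers C] {T : Monad C}
    (S : CartesianStrength T) (X Y : Monad.Algebra T) :
    IsRightAlgHom S
      (equalizer
        (curry ((X.a ▷ (X.A ⟹ Y.A)) ≫ (ihom.ev X.A).app Y.A))
        (curry ((β_ (T.obj X.A) (X.A ⟹ Y.A)).hom ≫ S.st (X.A ⟹ Y.A) X.A ≫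
          T.map ((β_ (X.A ⟹ Y.A) X.A).hom ≫ (ihom.ev X.A).app Y.A) ≫ Y.a)))
      X Y
      ((β_ _ X.A).hom ≫
        (X.A ◁ equalizer.ι
          (curry ((X.a ▷ (X.A ⟹ Y.A)) ≫ (ihom.ev X.A).app Y.A))
          (curry ((β_ (T.obj X.A) (X.A ⟹ Y.A)).hom ≫ S.st (X.A ⟹ Y.A) X.A ≫
            T.map ((β_ (X.A ⟹ Y.A) X.A).hom ≫ (ihom.ev X.A).app Y.A) ≫ Y.a))) ≫
        (ihom.ev X.A).app Y.A) := by
  set ev := (ihom.ev X.A).app Y.A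
  set u := (X.a ▷ (X.A ⟹ Y.A)) ≫ ev
  set v := (β_ (T.obj X.A) (X.A ⟹ Y.A)).hom ≫ S.st (X.A ⟹ Y.A) X.A ≫
    T.map ((β_ (X.A ⟹ Y.A) X.A).hom ≫ ev) ≫ Y.a
  set e := equalizer.ι (curry u) (curry v)
  have key : (T.obj X.A ◁ e) ≫ u = (T.obj X.A ◁ e) ≫ v :=
    whiskerLeft_comp_eq_of_comp_curry_eq (equalizer.condition _ _)
  rw [isRightAlgHom_braiding_comp_iff]
  calc (X.a ▷ _) ≫ (X.A ◁ e) ≫ ev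
      = (T.obj X.A ◁ e) ≫ u := (whisker_exchange_assoc _ _ _).symm
    _ = (T.obj X.A ◁ e) ≫ v := key
    _ = _ := by
      rw [BraidedCategory.braiding_naturality_right_assoc,
        reassoc_of% (S.st_natural_left e X.A), ← T.map_comp_assoc,
        BraidedCategory.braiding_naturality_left_assoc]
end
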